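/- (Bhattacharya–Chakraborty–Mallick exact sampling identity) Let Λ be d×d positive definite diagonal, Φ an m×d matrix, and α ∈ ℝ^m. If u ~ N(0, Λ) and δ ~ N(0, I_m) are independent, v = Φu + δ, w = (ΦΛΦ' + I_m)^{−1}(α − v), and θ = u + ΛΦ'w, then θ ~ N((Φ'Φ + Λ^{−1})^{−1}Φ'α, (Φ'Φ + Λ^{−1})^{−1}). -/

import Mathlib

open Matrix MeasureTheory ProbabilityTheory

/-!
The sample `θ` is an affine function `A z + K α` of the Gaussian vector `z = (u, δ)`, where
`K = ΛΦ'(ΦΛΦ' + I)⁻¹` and `A = [I - KΦ | -K]`, so it is Gaussian with mean `K α` and covariance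
`(I - KΦ) Λ (I - KΦ)' + K K'`. Writing `S = (Φ'Φ + Λ⁻¹)⁻¹`, the push-through identity gives
`K = SΦ'`, hence the mean `SΦ'α`; and then `I - KΦ = SΛ⁻¹`, so the covariance collapses to
`S (Λ⁻¹ + Φ'Φ) S = S`.
-/

/-- A measure on ι → ℝ is multivariate Gaussian with mean `mean` and covariance `C` iff
every linear functional of it is univariate Gaussian with the induced mean and variance. -/
def IsGaussianVec {ι : Type*} [Fintype ι] (μ : Measure (ι → ℝ))
    (mean : ι → ℝ) (C : Matrix ι ι ℝ) : Prop :=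
  ∀ a : ι → ℝ,
    μ.map (fun x => ∑ i, a i * x i) =
      ProbabilityTheory.gaussianReal (∑ i, a i * mean i)
        (Real.toNNReal (a ⬝ᵥ C.mulVec a))

theorem IsGaussianVec.map_affine {ι κ : Type*} [Fintype ι] [Fintype κ]
    {μ : Measure (ι → ℝ)} {mean : ι → ℝ} {C : Matrix ι ι ℝ} (h : IsGaussianVec μ mean C)
    (A : Matrix κ ι ℝ) (b : κ → ℝ) :
    IsGaussianVec (μ.map fun x => A *ᵥ x + b) (A *ᵥ mean + b) (A * C * Aᵀ) := by
  intro a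
  have h_affine : Measurable fun x : ι → ℝ => A *ᵥ x + b :=
    ((continuous_const.matrix_mulVec continuous_id).add continuous_const).measurable
  have h_dot : Measurable fun y : κ → ℝ => a ⬝ᵥ y :=
    (continuous_const.dotProduct continuous_id).measurable
  have h_dot_vecMul : Measurable fun x : ι → ℝ => (a ᵥ* A) ⬝ᵥ x :=
    (continuous_const.dotProduct continuous_id).measurable
  have h_comp : (fun y => a ⬝ᵥ y) ∘ (fun x => A *ᵥ x + b) =
      (· + a ⬝ᵥ b) ∘ fun x => (a ᵥ* A) ⬝ᵥ x := by
    funext x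
    simp only [Function.comp_apply, dotProduct_add, dotProduct_mulVec]
  have h_functional : μ.map (fun x => (a ᵥ* A) ⬝ᵥ x) =
      gaussianReal ((a ᵥ* A) ⬝ᵥ mean) ((a ᵥ* A) ⬝ᵥ C *ᵥ (a ᵥ* A)).toNNReal :=
    h (a ᵥ* A)
  change (μ.map _).map (fun y => a ⬝ᵥ y) =
    gaussianReal (a ⬝ᵥ (A *ᵥ mean + b)) (a ⬝ᵥ (A * C * Aᵀ) *ᵥ a).toNNReal
  rw [Measure.map_map h_dot h_affine, h_comp,
    ← Measure.map_map (measurable_add_const _) h_dot_vecMul, h_functional,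
    gaussianReal_map_add_const]
  congr 2
  · rw [dotProduct_add, dotProduct_mulVec]
  · rw [← mulVec_mulVec, ← mulVec_mulVec, mulVec_transpose, dotProduct_mulVec a A]

namespace Matrix

variable {R : Type*} [CommRing R] {m n : Type*} [Fintype m] [Fintype n] [DecidableEq n]

theorem mul_inv_eq_inv_mul_of_mul_eq_mul [DecidableEq m] {A : Matrix n n R} {B : Matrix m m R}
    {X Y : Matrix n m R} (hA : IsUnit A.det) (hB : IsUnit B.det) (h : A * X = Y * B) :
    X * B⁻¹ = A⁻¹ * Y := by
  calc X * B⁻¹ = A⁻¹ * (A * X) * B⁻¹ := by rw [nonsing_inv_mul_cancel_left A X hA]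
    _ = A⁻¹ * Y := by rw [h, ← Matrix.mul_assoc, mul_nonsing_inv_cancel_right B (A⁻¹ * Y) hB]

variable {Λ : Matrix n n R} (Φ : Matrix m n R)

theorem mul_transpose_mul_inv_eq_inv_mul_transpose [DecidableEq m] (hΛ : IsUnit Λ.det)
    (hN : IsUnit (Φᵀ * Φ + Λ⁻¹).det) (hB : IsUnit (Φ * Λ * Φᵀ + 1).det) :
    Λ * Φᵀ * (Φ * Λ * Φᵀ + 1)⁻¹ = (Φᵀ * Φ + Λ⁻¹)⁻¹ * Φᵀ := by
  refine mul_inv_eq_inv_mul_of_mul_eq_mul hN hB ?_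
  rw [Matrix.add_mul, Matrix.mul_add, Matrix.mul_one, ← Matrix.mul_assoc Λ⁻¹,
    nonsing_inv_mul _ hΛ, Matrix.one_mul]
  simp only [Matrix.mul_assoc]

/-- Joseph form of the Kalman covariance update with unit observation noise. -/
theorem joseph_form_eq_inv (hΛs : Λᵀ = Λ) (hΛ : IsUnit Λ.det)
    (hN : IsUnit (Φᵀ * Φ + Λ⁻¹).det) :
    (1 - (Φᵀ * Φ + Λ⁻¹)⁻¹ * Φᵀ * Φ) * Λ * (1 - (Φᵀ * Φ + Λ⁻¹)⁻¹ * Φᵀ * Φ)ᵀ +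
      (Φᵀ * Φ + Λ⁻¹)⁻¹ * Φᵀ * ((Φᵀ * Φ + Λ⁻¹)⁻¹ * Φᵀ)ᵀ = (Φᵀ * Φ + Λ⁻¹)⁻¹ := by
  set S := (Φᵀ * Φ + Λ⁻¹)⁻¹ with hS
  have hSs : Sᵀ = S := by
    rw [hS, transpose_nonsing_inv, transpose_add, transpose_mul, transpose_transpose,
      transpose_nonsing_inv, hΛs]
  have hP : 1 - S * Φᵀ * Φ = S * Λ⁻¹ := by
    rw [sub_eq_iff_eq_add, Matrix.mul_assoc, ← mul_add, add_comm, nonsing_inv_mul _ hN]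
  rw [hP, transpose_mul, transpose_mul, hSs, transpose_nonsing_inv, hΛs, transpose_transpose]
  calc S * Λ⁻¹ * Λ * (Λ⁻¹ * S) + S * Φᵀ * (Φ * S) = S * ((Φᵀ * Φ + Λ⁻¹) * S) := by
        rw [Matrix.mul_assoc S Λ⁻¹ Λ, nonsing_inv_mul _ hΛ, mul_one, add_mul, mul_add, add_comm]
        simp only [Matrix.mul_assoc]
    _ = S := by rw [mul_nonsing_inv _ hN, mul_one]

theorem PosDef.transpose_mul_self_add_inv {m n : Type*} [Fintype m] [Fintype n]
    [DecidableEq n] {Λ : Matrix n n ℝ} (hΛ : Λ.PosDef) (Φ : Matrix m n ℝ) :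
    (Φᵀ * Φ + Λ⁻¹).PosDef := by
  simpa only [conjTranspose_eq_transpose_of_trivial] using
    PosDef.posSemidef_add (posSemidef_conjTranspose_mul_self Φ) hΛ.inv

theorem PosDef.mul_mul_transpose_add_one {m n : Type*} [Fintype m] [Fintype n]
    [DecidableEq m] {Λ : Matrix n n ℝ} (hΛ : Λ.PosDef) (Φ : Matrix m n ℝ) :
    (Φ * Λ * Φᵀ + 1).PosDef := by
  simpa only [conjTranspose_eq_transpose_of_trivial] using
    PosDef.posSemidef_add (hΛ.posSemidef.mul_mul_conjTranspose_same Φ) PosDef.one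

end Matrix

theorem stmt_11_general (m d : ℕ) (Λ : Matrix (Fin d) (Fin d) ℝ)
    (hΛ : Λ.PosDef)
    (Φ : Matrix (Fin m) (Fin d) ℝ) (α : Fin m → ℝ)
    (μ : Measure ((Fin d ⊕ Fin m) → ℝ))
    (hz : IsGaussianVec μ 0
      (Matrix.fromBlocks Λ 0 0 (1 : Matrix (Fin m) (Fin m) ℝ))) :
    IsGaussianVec
      (μ.map fun z =>
        (fun i => z (Sum.inl i)) +
          (Λ * Φᵀ).mulVec
            ((Φ * Λ * Φᵀ + 1)⁻¹.mulVec
              (α - (Φ.mulVec (fun i => z (Sum.inl i)) + fun i => z (Sum.inr i)))))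
      ((Φᵀ * Φ + Λ⁻¹)⁻¹.mulVec (Φᵀ.mulVec α))
      ((Φᵀ * Φ + Λ⁻¹)⁻¹) := by
  have isUnit_det {n : ℕ} {M : Matrix (Fin n) (Fin n) ℝ} (hM : M.PosDef) : IsUnit M.det :=
    (isUnit_iff_isUnit_det M).mp hM.isUnit
  set S := (Φᵀ * Φ + Λ⁻¹)⁻¹
  have hK : Λ * Φᵀ * (Φ * Λ * Φᵀ + 1)⁻¹ = S * Φᵀ :=
    mul_transpose_mul_inv_eq_inv_mul_transpose Φ (isUnit_det hΛ)
      (isUnit_det (hΛ.transpose_mul_self_add_inv Φ)) (isUnit_det (hΛ.mul_mul_transpose_add_one Φ))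
  have hΛs : Λᵀ = Λ := by
    simpa only [conjTranspose_eq_transpose_of_trivial] using hΛ.isHermitian.eq
  have h_sampler : (fun z : Fin d ⊕ Fin m → ℝ =>
      (fun i => z (Sum.inl i)) + (Λ * Φᵀ) *ᵥ ((Φ * Λ * Φᵀ + 1)⁻¹ *ᵥ
        (α - (Φ *ᵥ (fun i => z (Sum.inl i)) + fun i => z (Sum.inr i))))) =
      fun z => fromCols (1 - S * Φᵀ * Φ) (-(S * Φᵀ)) *ᵥ z + (S * Φᵀ) *ᵥ α := by
    funext z
    rw [fromCols_mulVec, mulVec_mulVec, ← hK]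
    simp only [mulVec_sub, mulVec_add, sub_mulVec, neg_mulVec, one_mulVec, mulVec_mulVec,
      Function.comp_def]
    abel
  rw [h_sampler]
  convert hz.map_affine (fromCols (1 - S * Φᵀ * Φ) (-(S * Φᵀ))) ((S * Φᵀ) *ᵥ α) using 1
  · rw [mulVec_zero, zero_add, mulVec_mulVec]
  · rw [fromCols_mul_fromBlocks, transpose_fromCols, fromCols_mul_fromRows]
    simp only [Matrix.mul_zero, add_zero, zero_add, Matrix.mul_one, transpose_neg,
      Matrix.neg_mul, Matrix.mul_neg, neg_neg]
    exact (joseph_form_eq_inv Φ hΛs (isUnit_det hΛ)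
      (isUnit_det (hΛ.transpose_mul_self_add_inv Φ))).symm

/-- Bhattacharya–Chakraborty–Mallick exact sampling identity: if u ~ N(0, Λ) and
δ ~ N(0, I_m) are independent (jointly Gaussian with block-diagonal covariance),
v = Φu + δ, w = (ΦΛΦ' + I_m)⁻¹(α − v), and θ = u + ΛΦ'w, then
θ ~ N((Φ'Φ + Λ⁻¹)⁻¹Φ'α, (Φ'Φ + Λ⁻¹)⁻¹). -/
theorem stmt_11 (m d : ℕ) (Λ : Matrix (Fin d) (Fin d) ℝ)
    (hdiag : Λ.IsDiag) (hΛ : Λ.PosDef)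
    (Φ : Matrix (Fin m) (Fin d) ℝ) (α : Fin m → ℝ)
    (μ : Measure ((Fin d ⊕ Fin m) → ℝ)) [IsProbabilityMeasure μ]
    (hz : IsGaussianVec μ 0
      (Matrix.fromBlocks Λ 0 0 (1 : Matrix (Fin m) (Fin m) ℝ))) :
    IsGaussianVec
      (μ.map fun z =>
        (fun i => z (Sum.inl i)) +
          (Λ * Φᵀ).mulVec
            ((Φ * Λ * Φᵀ + 1)⁻¹.mulVec
              (α - (Φ.mulVec (fun i => z (Sum.inl i)) + fun i => z (Sum.inr i)))))
      ((Φᵀ * Φ + Λ⁻¹)⁻¹.mulVec (Φᵀ.mulVec α))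
      ((Φᵀ * Φ + Λ⁻¹)⁻¹) :=
  stmt_11_general m d Λ hΛ Φ α μ hz
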